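/- arXiv:1603.03068 — 7 statements merged into one kernel-verified Lean document; each statement's English description precedes it below -/
import Mathlib

section
/- Let A be a finite subset of an additive group G with φ(A) = 1, and suppose there exists a nonzero a ∈ A with 2a ∈ A. Then A is a subgroup of G. -/
/-!
If `φ(A) = 1`, every sum of two distinct elements of `A` lies in `A`. For such a set, once
`x, 2x ∈ A` all positive multiples of `x` lie in `A`; as `A` is finite, `x` has finite order,
so these positive multiples already exhaust the cyclic group generated by `x`. Applied to the
given `a`, this puts `-a` and `-2a` in `A`. For any other `x ∈ A` we get `x + a ∈ A`, then
`2x + a ∈ A` (as `a ≠ 0`), and finally `2x = (2x + a) + (-a) ∈ A`, unless `2x + a = -a`, in which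
case `2x = -2a ∈ A`. So `A` is closed under addition, and applying the first step to every
element shows that `A` is a subgroup.
-/

/-- `phi A` is the maximum cardinality of a subset `B ⊆ A` that is sum-avoiding in `A`. -/
def phi {G : Type*} [AddCommGroup G] [DecidableEq G] (A : Finset G) : ℕ :=
  ((A.powerset).filter (fun B => ∀ b₁ ∈ B, ∀ b₂ ∈ B, b₁ ≠ b₂ → b₁ + b₂ ∉ A)).sup Finset.card

theorem add_mem_of_phi_le_one {G : Type*} [AddCommGroup G] [DecidableEq G] {A : Finset G}
    (hphi : phi A ≤ 1) {x y : G} (hx : x ∈ A) (hy : y ∈ A) (hxy : x ≠ y) : x + y ∈ A := by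
  by_contra hxy_not_mem
  have hpair : {x, y} ∈ A.powerset.filter
      (fun B => ∀ b₁ ∈ B, ∀ b₂ ∈ B, b₁ ≠ b₂ → b₁ + b₂ ∉ A) := by
    simp only [Finset.mem_filter, Finset.mem_powerset, Finset.insert_subset_iff,
      Finset.singleton_subset_iff, Finset.mem_insert, Finset.mem_singleton]
    refine ⟨⟨hx, hy⟩, ?_⟩
    rintro b₁ (rfl | rfl) b₂ (rfl | rfl) hne
    · exact absurd rfl hne
    · exact hxy_not_mem
    · rwa [add_comm]
    · exact absurd rfl hne
  have htwo_le : 2 ≤ phi A := Finset.card_pair hxy ▸ Finset.le_sup (f := Finset.card) hpair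
  omega

section DistinctSumClosed

variable {G : Type*} {S : Set G}

theorem nsmul_mem_of_two_nsmul_mem [AddMonoid G]
    (hS : ∀ x ∈ S, ∀ y ∈ S, x ≠ y → x + y ∈ S) {x : G} (hx : x ∈ S) (h2x : 2 • x ∈ S)
    {n : ℕ} (hn : n ≠ 0) : n • x ∈ S := by
  obtain ⟨n, rfl⟩ := Nat.exists_eq_add_one_of_ne_zero hn
  clear hn
  induction n with
  | zero => rwa [zero_add, one_nsmul]
  | succ n ih =>
    rw [succ_nsmul]
    by_cases hnx : (n + 1) • x = x
    · rwa [hnx, ← two_nsmul]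
    · exact hS _ ih _ hx hnx

theorem isOfFinAddOrder_of_two_nsmul_mem [AddLeftCancelMonoid G] (hfin : S.Finite)
    (hS : ∀ x ∈ S, ∀ y ∈ S, x ≠ y → x + y ∈ S) {x : G} (hx : x ∈ S) (h2x : 2 • x ∈ S) :
    IsOfFinAddOrder x := by
  refine finite_multiples.mp ((hfin.insert 0).subset ?_)
  rintro _ ⟨n, rfl⟩
  rcases eq_or_ne n 0 with rfl | hn
  · simp
  · exact Set.mem_insert_of_mem _ (nsmul_mem_of_two_nsmul_mem hS hx h2x hn)

theorem zmultiples_subset_of_two_nsmul_mem [AddGroup G] (hfin : S.Finite)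
    (hS : ∀ x ∈ S, ∀ y ∈ S, x ≠ y → x + y ∈ S) {x : G} (hx : x ∈ S) (h2x : 2 • x ∈ S) :
    (AddSubgroup.zmultiples x : Set G) ⊆ S := by
  have hord := isOfFinAddOrder_of_two_nsmul_mem hfin hS hx h2x
  rw [← hord.multiples_eq_zmultiples]
  rintro _ ⟨n, rfl⟩
  show n • x ∈ S
  have hshift : n • x = (n + addOrderOf x) • x := by
    rw [add_nsmul, addOrderOf_nsmul_eq_zero, add_zero]
  rw [hshift]
  exact nsmul_mem_of_two_nsmul_mem hS hx h2x (by have := hord.addOrderOf_pos; omega)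

theorem add_self_mem_of_two_nsmul_mem [AddCommGroup G] (hfin : S.Finite)
    (hS : ∀ x ∈ S, ∀ y ∈ S, x ≠ y → x + y ∈ S) {a : G} (ha : a ∈ S) (ha0 : a ≠ 0)
    (h2a : 2 • a ∈ S) {x : G} (hx : x ∈ S) : x + x ∈ S := by
  have hmult := zmultiples_subset_of_two_nsmul_mem hfin hS ha h2a
  by_cases hxa : x = a
  · rwa [hxa, ← two_nsmul]
  have hxa_mem : x + a ∈ S := hS x hx a ha hxa
  have hxax_mem : x + a + x ∈ S := hS _ hxa_mem x hx (by simpa using ha0)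
  by_cases hneg : x + a + x = -a
  · have hxx : x + x = -(2 • a) := by
      calc x + x = x + a + x - a := by abel
        _ = -(2 • a) := by rw [hneg, two_nsmul]; abel
    exact hxx ▸ hmult (neg_mem (nsmul_mem (AddSubgroup.mem_zmultiples a) 2))
  · have := hS _ hxax_mem _ (hmult (neg_mem (AddSubgroup.mem_zmultiples a))) hneg
    rwa [show x + a + x + -a = x + x by abel] at this

end DistinctSumClosed

theorem AddSubgroup.exists_coe_eq_of_add_mem {G : Type*} [AddGroup G] {S : Set G}
    (hfin : S.Finite) (hne : S.Nonempty) (hS : ∀ x ∈ S, ∀ y ∈ S, x + y ∈ S) :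
    ∃ H : AddSubgroup G, (H : Set G) = S := by
  have hmult {x : G} (hx : x ∈ S) : (AddSubgroup.zmultiples x : Set G) ⊆ S :=
    zmultiples_subset_of_two_nsmul_mem hfin (fun x hx y hy _ => hS x hx y hy) hx
      (two_nsmul x ▸ hS x hx x hx)
  obtain ⟨a, ha⟩ := hne
  exact ⟨{ carrier := S
           add_mem' := fun hx hy => hS _ hx _ hy
           zero_mem' := hmult ha (zero_mem _)
           neg_mem' := fun hx => hmult hx (neg_mem (AddSubgroup.mem_zmultiples _)) },
    rfl⟩

theorem phi_one_with_doubling_is_subgroup {G : Type*} [AddCommGroup G] [DecidableEq G]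
    (A : Finset G) (hphi : phi A = 1)
    (a : G) (ha : a ∈ A) (ha0 : a ≠ 0) (h2a : 2 • a ∈ A) :
    ∃ H : AddSubgroup G, ∀ x, x ∈ A ↔ x ∈ H := by
  have hdistinct : ∀ x ∈ (A : Set G), ∀ y ∈ (A : Set G), x ≠ y → x + y ∈ (A : Set G) :=
    fun x hx y hy hxy => add_mem_of_phi_le_one hphi.le hx hy hxy
  have hadd : ∀ x ∈ (A : Set G), ∀ y ∈ (A : Set G), x + y ∈ (A : Set G) := by
    intro x hx y hy
    rcases eq_or_ne x y with rfl | hxy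
    · exact add_self_mem_of_two_nsmul_mem A.finite_toSet hdistinct ha ha0 h2a hx
    · exact hdistinct x hx y hy hxy
  obtain ⟨H, hH⟩ := AddSubgroup.exists_coe_eq_of_add_mem A.finite_toSet ⟨a, ha⟩ hadd
  exact ⟨H, fun x => (Set.ext_iff.mp hH x).symm⟩
end

section
/- Let A be a finite subset of an additive group G with φ(A) = 1. Then one of the following holds: (1) A is a subgroup of G; (2) A = H \ {0} for some 2-torsion subgroup H of G; (3) A = {b} for some b ∈ G; (4) A = {b, 0} for some b ∈ G; (5) A = {b, 0, −b} for some b ∈ G. -/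
open Finset AddSubgroup

theorem isOfFinAddOrder_of_forall_add_nsmul_mem {M : Type*} [AddLeftCancelMonoid M] {s : Set M}
    (hs : s.Finite) {c x : M} (h : ∀ k : ℕ, c + k • x ∈ s) : IsOfFinAddOrder x := by
  by_contra hx
  rw [← injective_nsmul_iff_not_isOfFinAddOrder] at hx
  exact Set.infinite_of_injective_forall_mem ((add_right_injective c).comp hx) h hs

theorem neg_mem_of_forall_nsmul_mem {G : Type*} [AddGroup G] {s : Set G} (hs : s.Finite) {x : G}
    (h : ∀ k : ℕ, k • x ∈ s) : -x ∈ s := by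
  have hx : IsOfFinAddOrder x :=
    isOfFinAddOrder_of_forall_add_nsmul_mem hs (c := 0) (by simpa using h)
  obtain ⟨k, hk⟩ := hx.mem_multiples_iff_mem_zmultiples.2 (neg_mem (mem_zmultiples x))
  exact hk ▸ h k

theorem card_le_of_nsmul_eq_zero {G : Type*} [AddGroup G] {A : Finset G} {a : G}
    (hsub : ∀ x ∈ A, x ∈ zmultiples a) {d : ℕ} (hd : 0 < d) (hda : d • a = 0) : #A ≤ d := by
  classical
  have hfin : IsOfFinAddOrder a := isOfFinAddOrder_iff_nsmul_eq_zero.2 ⟨d, hd, hda⟩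
  calc #A ≤ #((range (addOrderOf a)).image (· • a)) :=
        card_le_card fun x hx => hfin.mem_zmultiples_iff_mem_range_addOrderOf.1 (hsub x hx)
    _ ≤ addOrderOf a := card_image_le.trans (card_range _).le
    _ ≤ d := addOrderOf_le_of_nsmul_eq_zero hd hda

section

variable {G : Type*} [AddCommGroup G]

def DistinctSumClosed (A : Finset G) : Prop :=
  ∀ a ∈ A, ∀ b ∈ A, a ≠ b → a + b ∈ A

theorem distinctSumClosed_of_phi_le_one [DecidableEq G] {A : Finset G} (h : phi A ≤ 1) :
    DistinctSumClosed A := by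
  intro a ha b hb hab
  by_contra hsum
  have hpair : {a, b} ∈ A.powerset.filter
      (fun B => ∀ b₁ ∈ B, ∀ b₂ ∈ B, b₁ ≠ b₂ → b₁ + b₂ ∉ A) := by
    simp only [mem_filter, mem_powerset, insert_subset_iff, singleton_subset_iff, mem_insert,
      mem_singleton]
    refine ⟨⟨ha, hb⟩, ?_⟩
    rintro b₁ (rfl | rfl) b₂ (rfl | rfl) h₁₂
    · exact absurd rfl h₁₂
    · exact hsum
    · rwa [add_comm]
    · exact absurd rfl h₁₂
  have := (card_pair hab).symm.trans_le ((le_sup hpair).trans h)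
  omega

namespace DistinctSumClosed

variable {A : Finset G} {a b x y : G}

theorem sdiff_image_add_eq [DecidableEq G] (hA : DistinctSumClosed A) (ha : a ∈ A) :
    A \ (A.erase a).image (· + a) = {(2 - #A : ℤ) • a} := by
  set I := (A.erase a).image (· + a)
  have hIA : I ⊆ A :=
    image_subset_iff.2 fun y hy => hA y (mem_of_mem_erase hy) a ha (ne_of_mem_erase hy)
  have hcard : #I = #A - 1 := by
    rw [card_image_of_injective _ (add_left_injective a), card_erase_of_mem ha]
  have hpos : 0 < #A := card_pos.2 ⟨a, ha⟩
  obtain ⟨μ, hμ⟩ := card_eq_one.1 (show #(A \ I) = 1 by rw [card_sdiff_of_subset hIA]; omega)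
  rw [hμ, singleton_inj]
  -- Summing over `A = {μ} ∪ (A \ {a}) + a` determines `μ`.
  have hsum := sum_sdiff hIA (f := fun x => x)
  rw [hμ, sum_singleton, sum_image fun x _ y _ h => add_left_injective a h, sum_add_distrib,
    sum_const, card_erase_of_mem ha, sum_erase_eq_sub ha] at hsum
  rw [← natCast_zsmul, Nat.cast_sub hpos] at hsum
  linear_combination (norm := module) hsum

theorem two_sub_card_zsmul_mem (hA : DistinctSumClosed A) (ha : a ∈ A) :
    (2 - #A : ℤ) • a ∈ A := by
  classical
  exact (mem_sdiff.1 (hA.sdiff_image_add_eq ha ▸ mem_singleton_self _)).1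

theorem sub_mem_of_ne (hA : DistinctSumClosed A) (ha : a ∈ A) (hy : y ∈ A)
    (hne : y ≠ (2 - #A : ℤ) • a) : y - a ∈ A := by
  classical
  have hyI : y ∈ (A.erase a).image (· + a) := by
    by_contra hyI
    exact hne (mem_singleton.1 (hA.sdiff_image_add_eq ha ▸ mem_sdiff.2 ⟨hy, hyI⟩))
  obtain ⟨z, hz, rfl⟩ := mem_image.1 hyI
  simpa using mem_of_mem_erase hz

theorem two_nsmul_mem_of_subset_zmultiples (hA : DistinctSumClosed A) (hcard : 4 ≤ #A)
    (ha : a ∈ A) (hsub : ∀ x ∈ A, x ∈ zmultiples a) : 2 • a ∈ A := by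
  have hne : ∀ i j : ℤ, 0 < i - j → i - j < #A → i • a ≠ j • a := by
    intro i j hpos hlt hij
    lift i - j to ℕ using hpos.le with d hd
    have := card_le_of_nsmul_eq_zero hsub (d := d) (by omega)
      (by rw [← natCast_zsmul, hd, sub_zsmul, hij, add_neg_cancel])
    omega
  have h0 : (0 : G) ∈ A := by
    simpa using hA.sub_mem_of_ne ha ha (by simpa using hne 1 (2 - #A) (by omega) (by omega))
  have hneg : -a ∈ A := by
    simpa using hA.sub_mem_of_ne ha h0 (by simpa using hne 0 (2 - #A) (by omega) (by omega))
  simpa [two_nsmul] using hA.sub_mem_of_ne hneg ha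
    (by rw [smul_neg, ← neg_zsmul, neg_sub]
        simpa using (hne (#A - 2) 1 (by omega) (by omega)).symm)

theorem add_nsmul_mem (hA : DistinctSumClosed A) (ha : a ∈ A) (hb : b ∈ A)
    (hba : b ∉ zmultiples a) (k : ℕ) : b + k • a ∈ A := by
  induction k with
  | zero => simpa using hb
  | succ k ih =>
    have hne : b + k • a ≠ a := fun h =>
      hba ⟨1 - k, by dsimp only; linear_combination (norm := module) -h⟩
    simpa [succ_nsmul, add_assoc] using hA _ ih a ha hne

theorem add_mem_of_mem_zmultiples (hA : DistinctSumClosed A) (ha : a ∈ A) (hb : b ∈ A)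
    (hba : b ∉ zmultiples a) (hx : x ∈ zmultiples a) : b + x ∈ A := by
  have hfin : IsOfFinAddOrder a :=
    isOfFinAddOrder_of_forall_add_nsmul_mem A.finite_toSet (hA.add_nsmul_mem ha hb hba)
  obtain ⟨k, rfl⟩ := hfin.mem_multiples_iff_mem_zmultiples.2 hx
  exact hA.add_nsmul_mem ha hb hba k

theorem zmultiples_subset (hA : DistinctSumClosed A) (ha : a ∈ A) (hb : b ∈ A)
    (hba : b ∉ zmultiples a) (h2a : 2 • a ≠ 0) (hx : x ∈ zmultiples a) : x ∈ A := by
  have hcosets : ∀ r : ℕ, ∀ x ∈ zmultiples a, (r + 1) • b + x ∈ A := by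
    intro r
    induction r with
    | zero => simpa using fun x => hA.add_mem_of_mem_zmultiples ha hb hba
    | succ r ih =>
      intro x hx
      -- Split off `b + y` with `y ∈ {0, a}`; both choices can collide only if `2 • a = 0`.
      obtain ⟨y, hy, hne⟩ : ∃ y ∈ zmultiples a, b + y ≠ (r + 1) • b + (x - y) := by
        by_contra! h
        have h0 := h 0 (zero_mem _)
        have h1 := h a (mem_zmultiples a)
        apply h2a
        linear_combination (norm := module) h1 - h0
      have := hA _ (hA.add_mem_of_mem_zmultiples ha hb hba hy) _
        (ih _ (sub_mem hx hy)) hne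
      convert this using 1
      module
  have hfin : IsOfFinAddOrder b :=
    isOfFinAddOrder_of_forall_add_nsmul_mem A.finite_toSet (c := b) fun k => by
      simpa [succ_nsmul'] using hcosets k 0 (zero_mem _)
  obtain ⟨r, hr⟩ := Nat.exists_eq_add_one_of_ne_zero hfin.addOrderOf_pos.ne'
  simpa [← hr] using hcosets r x hx

theorem two_nsmul_mem_or_eq_zero (hA : DistinctSumClosed A) (hcard : 4 ≤ #A) (ha : a ∈ A) :
    2 • a ∈ A ∨ 2 • a = 0 := by
  by_cases hsub : ∀ x ∈ A, x ∈ zmultiples a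
  · exact Or.inl (hA.two_nsmul_mem_of_subset_zmultiples hcard ha hsub)
  · push Not at hsub
    obtain ⟨b, hb, hba⟩ := hsub
    by_cases h2a : 2 • a = 0
    · exact Or.inr h2a
    · exact Or.inl (hA.zmultiples_subset ha hb hba h2a (nsmul_mem (mem_zmultiples a) 2))

theorem two_nsmul_eq_zero_of_neg_mem (hA : DistinctSumClosed A) (h0 : (0 : G) ∉ A) (hx : x ∈ A)
    (hnx : -x ∈ A) : 2 • x = 0 := by
  by_contra h
  have hne : x ≠ -x := fun hxx => h (by rw [two_nsmul]; nth_rw 1 [hxx]; exact neg_add_cancel x)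
  exact h0 (by simpa using hA x hx (-x) hnx hne)

theorem two_nsmul_eq_zero_of_card_eq_three (hA : DistinctSumClosed A)
    (hcard : #A = 3) (h0 : (0 : G) ∉ A) (hx : x ∈ A) : 2 • x = 0 :=
  hA.two_nsmul_eq_zero_of_neg_mem h0 hx (by simpa [hcard] using hA.two_sub_card_zsmul_mem hx)

theorem exists_eq_pair_zero [DecidableEq G] (hA : DistinctSumClosed A) (hcard : #A = 2) :
    ∃ b, A = {b, 0} := by
  obtain ⟨a, b, hab, rfl⟩ := card_eq_two.1 hcard
  have hsum := hA a (mem_insert_self a {b}) b (mem_insert_of_mem (mem_singleton_self b)) hab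
  rw [mem_insert, mem_singleton, add_eq_left, add_eq_right] at hsum
  rcases hsum with rfl | rfl
  · exact ⟨a, rfl⟩
  · exact ⟨b, pair_comm 0 b⟩

theorem exists_eq_triple_zero_neg [DecidableEq G] (hA : DistinctSumClosed A) (hcard : #A = 3)
    (h0 : (0 : G) ∈ A) : ∃ b, A = {b, 0, -b} := by
  obtain ⟨x, y, hxy, he⟩ :=
    card_eq_two.1 (show #(A.erase 0) = 2 by rw [card_erase_of_mem h0, hcard])
  have hA0 : A = {0, x, y} := by rw [← insert_erase h0, he]
  have hx : x ∈ A.erase 0 := he ▸ mem_insert_self x {y}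
  have hy : y ∈ A.erase 0 := he ▸ mem_insert_of_mem (mem_singleton_self y)
  have hsum := hA x (mem_of_mem_erase hx) y (mem_of_mem_erase hy) hxy
  rw [hA0, mem_insert, mem_insert, mem_singleton, add_eq_left, add_eq_right] at hsum
  rcases hsum with hsum | hy0 | hx0
  · refine ⟨x, ?_⟩
    rw [hA0, neg_eq_of_add_eq_zero_right hsum, insert_comm]
  · exact absurd hy0 (ne_of_mem_erase hy)
  · exact absurd hx0 (ne_of_mem_erase hx)

theorem exists_addSubgroup_mem_iff (hA : DistinctSumClosed A)
    (h2 : ∀ a ∈ A, 2 • a ∈ A ∨ 2 • a = 0) :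
    ∃ H : AddSubgroup G, ∀ x, x ∈ H ↔ x = 0 ∨ x ∈ A := by
  let M : AddSubmonoid G :=
    { carrier := {x | x = 0 ∨ x ∈ A}
      zero_mem' := Or.inl rfl
      add_mem' := by
        rintro x y (rfl | hx) (rfl | hy)
        · simp
        · simp [hy]
        · simp [hx]
        · obtain rfl | hxy := eq_or_ne x y
          · simpa [two_nsmul, or_comm] using h2 x hx
          · exact Or.inr (hA x hx y hy hxy) }
  have hfin : (M : Set G).Finite := (A.finite_toSet.insert 0).subset fun x hx => hx
  exact ⟨{ M with neg_mem' := fun hx => neg_mem_of_forall_nsmul_mem hfin (nsmul_mem hx) },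
    fun _ => Iff.rfl⟩

theorem eq_addSubgroup_or_eq_addSubgroup_diff_zero (hA : DistinctSumClosed A)
    (h2 : ∀ a ∈ A, 2 • a ∈ A ∨ 2 • a = 0) :
    (∃ H : AddSubgroup G, ∀ x, x ∈ A ↔ x ∈ H) ∨
    (∃ H : AddSubgroup G, (∀ x ∈ H, 2 • x = 0) ∧ ∀ x, x ∈ A ↔ (x ∈ H ∧ x ≠ 0)) := by
  obtain ⟨H, hH⟩ := hA.exists_addSubgroup_mem_iff h2
  by_cases h0 : (0 : G) ∈ A
  · exact Or.inl ⟨H, fun x => by rw [hH]; exact ⟨Or.inr, by rintro (rfl | hx) <;> assumption⟩⟩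
  have hmem : ∀ x, x ∈ A ↔ x ∈ H ∧ x ≠ 0 := fun x => by
    rw [hH]
    exact ⟨fun hx => ⟨Or.inr hx, ne_of_mem_of_not_mem hx h0⟩, fun ⟨hx, hx0⟩ => hx.resolve_left hx0⟩
  refine Or.inr ⟨H, fun x hx => ?_, hmem⟩
  obtain rfl | hx0 := eq_or_ne x 0
  · simp
  · exact hA.two_nsmul_eq_zero_of_neg_mem h0 ((hmem x).2 ⟨hx, hx0⟩)
      ((hmem (-x)).2 ⟨neg_mem hx, neg_ne_zero.2 hx0⟩)

end DistinctSumClosed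

end

/-- Characterisation of `φ(A) = 1` (Proposition 1.1). -/
theorem phi_eq_one_classification {G : Type*} [AddCommGroup G] [DecidableEq G]
    (A : Finset G) (hphi : phi A = 1) :
    (∃ H : AddSubgroup G, ∀ x, x ∈ A ↔ x ∈ H) ∨
    (∃ H : AddSubgroup G, (∀ x ∈ H, 2 • x = 0) ∧ ∀ x, x ∈ A ↔ (x ∈ H ∧ x ≠ 0)) ∨
    (∃ b : G, A = {b}) ∨
    (∃ b : G, A = {b, 0}) ∨
    (∃ b : G, A = {b, 0, -b}) := by
  have hA := distinctSumClosed_of_phi_le_one hphi.le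
  have hpos : 0 < #A := card_pos.2 <| nonempty_iff_ne_empty.2 fun h => by simp [h, phi] at hphi
  obtain h1 | h2 | h3 | h4 : #A = 1 ∨ #A = 2 ∨ #A = 3 ∨ 4 ≤ #A := by omega
  · exact Or.inr <| Or.inr <| Or.inl <| card_eq_one.1 h1
  · exact Or.inr <| Or.inr <| Or.inr <| Or.inl <| hA.exists_eq_pair_zero h2
  · by_cases h0 : (0 : G) ∈ A
    · exact Or.inr <| Or.inr <| Or.inr <| Or.inr <| hA.exists_eq_triple_zero_neg h3 h0
    · exact (hA.eq_addSubgroup_or_eq_addSubgroup_diff_zero fun a ha =>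
        Or.inr (hA.two_nsmul_eq_zero_of_card_eq_three h3 h0 ha)).imp_right Or.inl
  · exact (hA.eq_addSubgroup_or_eq_addSubgroup_diff_zero fun a ha =>
      hA.two_nsmul_mem_or_eq_zero h4 ha).imp_right Or.inl
end

section
/- For n ≥ 4, let G = ℤ/2ⁿℤ and A = { (4m+1)·2ʲ mod 2ⁿ : m ∈ ℤ, 0 ≤ j ≤ n−2 }. Then φ(A) ≤ 4; that is, for any five distinct elements a₁,…,a₅ of A there exist i ≠ j with aᵢ + aⱼ ∈ A. -/
/-!
Write each element of `A` as `(4m+1)·2ʲ` and attach to it the key `(j, m mod 2)`. If two elements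
of a sum-free `B ⊆ A` had exponents `j₁ + 2 ≤ j₂`, their sum `(4m₁+1 + (4m₂+1)·2^(j₂-j₁))·2^j₁`
would lie in `A`; so the exponents in `B` take at most two consecutive values. If two elements share
the key, then `m₁ = m₂ + 2t` and their sum is `(4(m₂+t)+1)·2^(j+1)`, which lies in `A` unless
`j = n - 2`, in which case `8t·2ʲ = 0` makes the two elements equal. Hence the key is injective on
`B` with values in a set of size `2 · 2 = 4`.
-/

def oneModFourMulTwoPow (R : Type*) [CommRing R] (N : ℕ) : Set R :=
  {x | ∃ m : ℤ, ∃ j : ℕ, j ≤ N ∧ x = ((4 * m + 1 : ℤ) : R) * 2 ^ j}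

namespace oneModFourMulTwoPow

variable {R : Type*} [CommRing R] {N : ℕ}

lemma le_add_one_of_add_notMem {m₁ m₂ : ℤ} {j₁ j₂ : ℕ} (hj₁ : j₁ ≤ N)
    (h : ((4 * m₁ + 1 : ℤ) : R) * 2 ^ j₁ + ((4 * m₂ + 1 : ℤ) : R) * 2 ^ j₂ ∉
      oneModFourMulTwoPow R N) :
    j₂ ≤ j₁ + 1 := by
  by_contra! hj
  obtain ⟨d, rfl⟩ : ∃ d, j₂ = j₁ + 2 + d := ⟨j₂ - j₁ - 2, by omega⟩
  refine h ⟨m₁ + (4 * m₂ + 1) * 2 ^ d, j₁, hj₁, ?_⟩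
  push_cast
  ring

lemma eq_of_add_notMem (h2 : (2 : R) ^ (N + 3) = 0) {m₁ m₂ : ℤ} {j : ℕ} (hj : j ≤ N)
    (hm : m₁ ≡ m₂ [ZMOD 2])
    (h : ((4 * m₁ + 1 : ℤ) : R) * 2 ^ j + ((4 * m₂ + 1 : ℤ) : R) * 2 ^ j ∉
      oneModFourMulTwoPow R N) :
    ((4 * m₁ + 1 : ℤ) : R) * 2 ^ j = ((4 * m₂ + 1 : ℤ) : R) * 2 ^ j := by
  obtain ⟨t, ht⟩ := hm.symm.dvd
  obtain rfl : m₁ = m₂ + 2 * t := by omega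
  rcases hj.lt_or_eq with hj | rfl
  · exact (h ⟨m₂ + t, j + 1, hj, by push_cast; ring⟩).elim
  · calc ((4 * (m₂ + 2 * t) + 1 : ℤ) : R) * 2 ^ j
        = ((4 * m₂ + 1 : ℤ) : R) * 2 ^ j + t * 2 ^ (j + 3) := by push_cast; ring
      _ = ((4 * m₂ + 1 : ℤ) : R) * 2 ^ j := by rw [h2, mul_zero, add_zero]

theorem card_le_four_of_add_notMem (h2 : (2 : R) ^ (N + 3) = 0) {B : Finset R}
    (hB : ↑B ⊆ oneModFourMulTwoPow R N)
    (hfree : ∀ b₁ ∈ B, ∀ b₂ ∈ B, b₁ ≠ b₂ → b₁ + b₂ ∉ oneModFourMulTwoPow R N) :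
    B.card ≤ 4 := by
  choose! m j hj hmj using fun b (hb : b ∈ B) => hB hb
  obtain rfl | hne := B.eq_empty_or_nonempty
  · simp
  obtain ⟨b₀, hb₀, hmin⟩ := B.exists_min_image j hne
  have hmax : ∀ b ∈ B, j b ≤ j b₀ + 1 := fun b hb => by
    by_cases heq : b₀ = b
    · subst heq; omega
    · have hsum := hfree b₀ hb₀ b hb heq
      rw [hmj b₀ hb₀, hmj b hb] at hsum
      exact le_add_one_of_add_notMem (hj b₀ hb₀) hsum
  have hmaps : Set.MapsTo (fun b => (j b, (m b : ZMod 2))) B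
      ((({j b₀, j b₀ + 1} : Finset ℕ) ×ˢ Finset.univ : Finset (ℕ × ZMod 2)) : Set _) :=
    fun b hb => by
      have := hmin b hb
      have := hmax b hb
      simp only [Finset.coe_product, Set.mem_prod, Finset.coe_insert, Finset.coe_singleton,
        Set.mem_insert_iff, Set.mem_singleton_iff, Finset.coe_univ, Set.mem_univ, and_true]
      omega
  have hinj : Set.InjOn (fun b => (j b, (m b : ZMod 2))) B := by
    intro b₁ hb₁ b₂ hb₂ hkey
    obtain ⟨hjj, hmm⟩ := Prod.mk.inj hkey
    by_contra hne
    have hsum := hfree b₁ hb₁ b₂ hb₂ hne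
    rw [hmj b₁ hb₁, hmj b₂ hb₂, ← hjj] at hsum hne
    exact hne <| eq_of_add_notMem h2 (hj b₁ hb₁) ((ZMod.intCast_eq_intCast_iff _ _ 2).mp hmm) hsum
  simpa using Finset.card_le_card_of_injOn _ hmaps hinj

end oneModFourMulTwoPow

lemma ZMod.two_pow_eq_zero {n k : ℕ} (h : n ≤ k) : (2 : ZMod (2 ^ n)) ^ k = 0 :=
  pow_eq_zero_of_le h (by exact_mod_cast ZMod.natCast_self (2 ^ n))

theorem counterexample_phi_le_four_general (n : ℕ)
    (A : Finset (ZMod (2 ^ n)))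
    (hA : ∀ x : ZMod (2 ^ n),
      x ∈ A ↔ ∃ m : ℤ, ∃ j : ℕ, j ≤ n - 2 ∧ x = ((4 * m + 1 : ℤ) : ZMod (2 ^ n)) * 2 ^ j) :
    phi A ≤ 4 := by
  have hA' : ∀ x, x ∈ A ↔ x ∈ oneModFourMulTwoPow (ZMod (2 ^ n)) (n - 2) := hA
  refine Finset.sup_le fun B hB => ?_
  simp only [Finset.mem_filter, Finset.mem_powerset] at hB
  obtain ⟨hBA, hfree⟩ := hB
  refine oneModFourMulTwoPow.card_le_four_of_add_notMem (ZMod.two_pow_eq_zero (by omega))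
    (fun b hb => (hA' b).mp (hBA hb)) fun b₁ hb₁ b₂ hb₂ hne => ?_
  rw [← hA']
  exact hfree b₁ hb₁ b₂ hb₂ hne

theorem counterexample_phi_le_four (n : ℕ) (hn : 4 ≤ n)
    (A : Finset (ZMod (2 ^ n)))
    (hA : ∀ x : ZMod (2 ^ n),
      x ∈ A ↔ ∃ m : ℤ, ∃ j : ℕ, j ≤ n - 2 ∧ x = ((4 * m + 1 : ℤ) : ZMod (2 ^ n)) * 2 ^ j) :
    phi A ≤ 4 :=
  counterexample_phi_le_four_general n A hA
end

section
/- For n ≥ 4, let G = ℤ/2ⁿℤ and A = { (4m+1)·2ʲ mod 2ⁿ : m ∈ ℤ, 0 ≤ j ≤ n−2 }. Then the set {1, 2, 5, 10} (mod 2ⁿ) is a sum-avoiding subset of A of size 4, hence φ(A) ≥ 4. -/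
theorem card_le_phi {G : Type*} [AddCommGroup G] [DecidableEq G] {A B : Finset G} (hBA : B ⊆ A)
    (hB : ∀ b₁ ∈ B, ∀ b₂ ∈ B, b₁ ≠ b₂ → b₁ + b₂ ∉ A) : B.card ≤ phi A :=
  Finset.le_sup (Finset.mem_filter.2 ⟨Finset.mem_powerset.2 hBA, hB⟩)

theorem ZMod.four_mul_add_one_mul_two_pow_ne_add_of_mem (m : ZMod 16) (j : ℕ) {a b : ZMod 16}
    (ha : a ∈ ({1, 2, 5, 10} : Finset (ZMod 16))) (hb : b ∈ ({1, 2, 5, 10} : Finset (ZMod 16)))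
    (hab : a ≠ b) : (4 * m + 1) * 2 ^ j ≠ a + b := by
  have hsum : a + b ∈ ({3, 6, 7, 11, 12, 15} : Finset (ZMod 16)) := by
    revert a b; decide
  rcases lt_or_ge j 4 with hj | hj
  · have hsmall : ∀ m : ZMod 16, ∀ j < 4,
        (4 * m + 1) * 2 ^ j ∉ ({3, 6, 7, 11, 12, 15} : Finset (ZMod 16)) := by
      decide
    exact fun h => hsmall m j hj (h ▸ hsum)
  · rw [pow_eq_zero_of_le hj (by decide), mul_zero]
    exact fun h => absurd (h ▸ hsum) (by decide)

theorem counterexample_phi_ge_four (n : ℕ) (hn : 4 ≤ n)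
    (A : Finset (ZMod (2 ^ n)))
    (hA : ∀ x : ZMod (2 ^ n),
      x ∈ A ↔ ∃ m : ℤ, ∃ j : ℕ, j ≤ n - 2 ∧ x = ((4 * m + 1 : ℤ) : ZMod (2 ^ n)) * 2 ^ j) :
    ({1, 2, 5, 10} : Finset (ZMod (2 ^ n))) ⊆ A ∧
    (∀ b₁ ∈ ({1, 2, 5, 10} : Finset (ZMod (2 ^ n))),
      ∀ b₂ ∈ ({1, 2, 5, 10} : Finset (ZMod (2 ^ n))), b₁ ≠ b₂ → b₁ + b₂ ∉ A) ∧
    ({1, 2, 5, 10} : Finset (ZMod (2 ^ n))).card = 4 ∧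
    4 ≤ phi A := by
  set B : Finset (ZMod (2 ^ n)) := {1, 2, 5, 10}
  obtain ⟨π⟩ : Nonempty (ZMod (2 ^ n) →+* ZMod 16) := ⟨ZMod.castHom (pow_dvd_pow 2 hn) _⟩
  have hB16 : B.image π = {1, 2, 5, 10} := by simp [B, map_ofNat]
  have hcard : B.card = 4 :=
    le_antisymm Finset.card_le_four
      ((by rw [hB16]; rfl : 4 = (B.image π).card).trans_le Finset.card_image_le)
  have hinj : Set.InjOn π B := Finset.card_image_iff.1 (by rw [hB16, hcard]; rfl)
  have hsub : B ⊆ A := by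
    simp only [B, Finset.insert_subset_iff, Finset.singleton_subset_iff, hA]
    exact ⟨⟨0, 0, by omega, by simp⟩, ⟨0, 1, by omega, by simp⟩, ⟨1, 0, by omega, by norm_num⟩,
      ⟨1, 1, by omega, by norm_num⟩⟩
  have havoid : ∀ b₁ ∈ B, ∀ b₂ ∈ B, b₁ ≠ b₂ → b₁ + b₂ ∉ A := by
    intro b₁ h₁ b₂ h₂ hne hmem
    obtain ⟨m, j, -, hx⟩ := (hA _).1 hmem
    refine ZMod.four_mul_add_one_mul_two_pow_ne_add_of_mem (m : ZMod 16) j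
      (hB16 ▸ Finset.mem_image_of_mem π h₁) (hB16 ▸ Finset.mem_image_of_mem π h₂)
      (hinj.ne h₁ h₂ hne) ?_
    rw [← map_add, hx]
    simp [map_ofNat]
  exact ⟨hsub, havoid, hcard, hcard ▸ card_le_phi hsub havoid⟩
end

section
/- Let k ≥ 4 be such that p = 2^{k−1} − 1 is prime, let H be a finite additive group, let G = (ℤ/pℤ) × H, and let A = A₀ × H where A₀ = {2ⁱ mod p : 0 ≤ i ≤ k−2}. Then for any k distinct elements a₁, …, a_k ∈ A, there exist i < j with aᵢ + aⱼ ∈ A; i.e., φ(A) ≤ k−1. -/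
theorem phi_le_card_of_add_mem_of_eq {G K : Type*} [AddCommGroup G] [DecidableEq G]
    (A : Finset G) (f : G → K) (S : Finset K) (hf : Set.MapsTo f A S)
    (hadd : ∀ a ∈ A, ∀ b ∈ A, f a = f b → a + b ∈ A) :
    phi A ≤ S.card := by
  refine Finset.sup_le fun B hB => ?_
  obtain ⟨hBA, hfree⟩ := Finset.mem_filter.mp hB
  have hBA : B ⊆ A := Finset.mem_powerset.mp hBA
  refine Finset.card_le_card_of_injOn f (fun b hb => hf (hBA hb)) fun a ha b hb hab => ?_
  by_contra hne
  exact hfree a ha b hb hne (hadd a (hBA ha) b (hBA hb) hab)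

theorem ZMod.natCast_pow_eq_one {a : ℕ} (ha : 0 < a) (n : ℕ) :
    ((a : ZMod (a ^ n - 1)) ^ n) = 1 := by
  have hzero : ((a ^ n - 1 : ℕ) : ZMod (a ^ n - 1)) = 0 := ZMod.natCast_self _
  rw [Nat.cast_sub (Nat.one_le_pow _ _ ha)] at hzero
  push_cast at hzero
  exact sub_eq_zero.mp hzero

theorem exists_two_pow_eq_add_self {R : Type*} [Semiring R] {m i : ℕ}
    (h : (2 : R) ^ (m + 1) = 1) (hi : i ≤ m) : ∃ j ≤ m, (2 : R) ^ i + 2 ^ i = 2 ^ j := by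
  have hdouble : (2 : R) ^ i + 2 ^ i = 2 ^ (i + 1) := by rw [pow_succ, mul_two]
  rcases hi.lt_or_eq with hlt | rfl
  · exact ⟨i + 1, hlt, hdouble⟩
  · exact ⟨0, Nat.zero_le _, by rw [hdouble, h, pow_zero]⟩

theorem mersenne_counterexample_phi_general (k : ℕ) (hk : 4 ≤ k)
    (H : Type*) [AddCommGroup H] [DecidableEq H]
    (A₀ : Finset (ZMod (2 ^ (k - 1) - 1)))
    (hA₀ : ∀ x : ZMod (2 ^ (k - 1) - 1), x ∈ A₀ ↔ ∃ i : ℕ, i ≤ k - 2 ∧ x = 2 ^ i)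
    (A : Finset (ZMod (2 ^ (k - 1) - 1) × H))
    (hA : ∀ x : ZMod (2 ^ (k - 1) - 1) × H, x ∈ A ↔ x.1 ∈ A₀) :
    phi A ≤ k - 1 := by
  have hk1 : k - 2 + 1 = k - 1 := by omega
  have htwo : (2 : ZMod (2 ^ (k - 1) - 1)) ^ (k - 2 + 1) = 1 := by
    simpa [hk1] using ZMod.natCast_pow_eq_one two_pos (k - 1)
  have hcard : A₀.card ≤ k - 1 := by
    have hsub : A₀ ⊆ (Finset.range (k - 1)).image ((2 : ZMod (2 ^ (k - 1) - 1)) ^ ·) := by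
      intro x hx
      obtain ⟨i, hi, rfl⟩ := (hA₀ x).mp hx
      exact Finset.mem_image.mpr ⟨i, Finset.mem_range.mpr (by omega), rfl⟩
    exact (Finset.card_le_card hsub).trans (Finset.card_image_le.trans (Finset.card_range _).le)
  refine (phi_le_card_of_add_mem_of_eq A Prod.fst A₀ (fun a ha => (hA a).mp ha) ?_).trans hcard
  intro a ha b _ hab
  obtain ⟨i, hi, hai⟩ := (hA₀ a.1).mp ((hA a).mp ha)
  obtain ⟨j, hj, hsum⟩ := exists_two_pow_eq_add_self htwo hi
  rw [hA, hA₀, Prod.fst_add, ← hab, hai]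
  exact ⟨j, hj, hsum⟩

theorem mersenne_counterexample_phi (k : ℕ) (hk : 4 ≤ k)
    (hp : Nat.Prime (2 ^ (k - 1) - 1))
    (H : Type*) [AddCommGroup H] [Fintype H] [DecidableEq H]
    (A₀ : Finset (ZMod (2 ^ (k - 1) - 1)))
    (hA₀ : ∀ x : ZMod (2 ^ (k - 1) - 1), x ∈ A₀ ↔ ∃ i : ℕ, i ≤ k - 2 ∧ x = 2 ^ i)
    (A : Finset (ZMod (2 ^ (k - 1) - 1) × H))
    (hA : ∀ x : ZMod (2 ^ (k - 1) - 1) × H, x ∈ A ↔ x.1 ∈ A₀) :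
    phi A ≤ k - 1 :=
  mersenne_counterexample_phi_general k hk H A₀ hA₀ A hA
end

section
/- Let H be a finite additive group of odd order and B ⊆ H a Sidon set. Then φ(H \ B) < 4; that is, for any four distinct elements a₁, a₂, a₃, a₄ of H \ B, at least one of the six pairwise sums aᵢ + aⱼ (i < j) lies in H \ B. -/
/-!
If four distinct elements `a₁, a₂, a₃, a₄` had all their pairwise sums in the Sidon set `B`, then
the identity `(a₁ + a₂) + (a₃ + a₄) = (a₁ + a₃) + (a₂ + a₄)` would be a coincidence of two sums of
elements of `B`, forcing `a₂ = a₃` or `a₁ = a₄`. Hence every sum-avoiding subset of `H \ B` has at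
most three elements.
-/

open Finset

def IsSidon {G : Type*} [AddCommMonoid G] (B : Finset G) : Prop :=
  ∀ b₁ ∈ B, ∀ b₂ ∈ B, ∀ b₃ ∈ B, ∀ b₄ ∈ B,
    b₁ + b₂ = b₃ + b₄ → (b₁ = b₃ ∧ b₂ = b₄) ∨ (b₁ = b₄ ∧ b₂ = b₃)

namespace IsSidon

variable {G : Type*} [AddCancelCommMonoid G] {B : Finset G}

theorem eq_or_eq_of_add_mem (hB : IsSidon B) {a₁ a₂ a₃ a₄ : G} (h₁₂ : a₁ + a₂ ∈ B)
    (h₃₄ : a₃ + a₄ ∈ B) (h₁₃ : a₁ + a₃ ∈ B) (h₂₄ : a₂ + a₄ ∈ B) : a₂ = a₃ ∨ a₁ = a₄ := by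
  have hsum : (a₁ + a₂) + (a₃ + a₄) = (a₁ + a₃) + (a₂ + a₄) := by abel
  rcases hB _ h₁₂ _ h₃₄ _ h₁₃ _ h₂₄ hsum with ⟨h, -⟩ | ⟨h, -⟩
  · exact .inl (add_left_cancel h)
  · exact .inr (add_right_cancel (h.trans (add_comm a₂ a₄)))

theorem card_le_three_of_add_mem (hB : IsSidon B) {C : Finset G}
    (hC : ∀ c₁ ∈ C, ∀ c₂ ∈ C, c₁ ≠ c₂ → c₁ + c₂ ∈ B) : #C ≤ 3 := by
  classical
  by_contra! hcard
  obtain ⟨a, ha⟩ : C.Nonempty := card_pos.1 (by omega)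
  have hcard' : 2 < #(C.erase a) := by rw [card_erase_of_mem ha]; omega
  obtain ⟨b, hb, c, hc, d, hd, hbc, hbd, hcd⟩ := two_lt_card.1 hcard'
  rw [mem_erase] at hb hc hd
  rcases hB.eq_or_eq_of_add_mem (hC a ha b hb.2 hb.1.symm) (hC c hc.2 d hd.2 hcd)
    (hC a ha c hc.2 hc.1.symm) (hC b hb.2 d hd.2 hbd) with h | h
  · exact hbc h
  · exact hd.1 h.symm

end IsSidon

theorem phi_lt_of_forall_card_lt {G : Type*} [AddCommGroup G] [DecidableEq G] {A : Finset G}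
    {n : ℕ} (hn : 0 < n)
    (h : ∀ C ⊆ A, (∀ c₁ ∈ C, ∀ c₂ ∈ C, c₁ ≠ c₂ → c₁ + c₂ ∉ A) → #C < n) : phi A < n := by
  rw [phi, Finset.sup_lt_iff hn]
  intro C hC
  rw [mem_filter, mem_powerset] at hC
  exact h C hC.1 hC.2

theorem sidon_complement_phi_lt_four_general {H : Type*} [AddCommGroup H] [Fintype H] [DecidableEq H]
    (B : Finset H)
    (hSidon : ∀ b₁ ∈ B, ∀ b₂ ∈ B, ∀ b₃ ∈ B, ∀ b₄ ∈ B,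
      b₁ + b₂ = b₃ + b₄ → (b₁ = b₃ ∧ b₂ = b₄) ∨ (b₁ = b₄ ∧ b₂ = b₃)) :
    phi ((Finset.univ : Finset H) \ B) < 4 := by
  refine phi_lt_of_forall_card_lt (by norm_num) fun C _ hC => Nat.lt_succ_of_le ?_
  have hsums : ∀ c₁ ∈ C, ∀ c₂ ∈ C, c₁ ≠ c₂ → c₁ + c₂ ∈ B := fun c₁ h₁ c₂ h₂ hne => by
    simpa using hC c₁ h₁ c₂ h₂ hne
  exact IsSidon.card_le_three_of_add_mem hSidon hsums

theorem sidon_complement_phi_lt_four {H : Type*} [AddCommGroup H] [Fintype H] [DecidableEq H]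
    (hodd : Odd (Fintype.card H))
    (B : Finset H)
    (hSidon : ∀ b₁ ∈ B, ∀ b₂ ∈ B, ∀ b₃ ∈ B, ∀ b₄ ∈ B,
      b₁ + b₂ = b₃ + b₄ → (b₁ = b₃ ∧ b₂ = b₄) ∨ (b₁ = b₄ ∧ b₂ = b₃)) :
    phi ((Finset.univ : Finset H) \ B) < 4 :=
  sidon_complement_phi_lt_four_general B hSidon
end

section
/- Let H be a finite abelian group of odd order, A ⊆ H, and ε₁ > 0, and suppose (1/|H|) Σ_{x∈H} |1_A(x) − 1_A(2x)| ≤ 4ε₁. Then for every character ξ of H and every natural number j, |1̂_A(2ʲξ) − 1̂_A(ξ)| ≤ 4jε₁. -/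
/-- The real indicator function of a finite set. -/
def indic {H : Type*} [DecidableEq H] (A : Finset H) (x : H) : ℝ :=
  if x ∈ A then 1 else 0

/-- The Fourier coefficient of the indicator of `A` at the character `x ↦ ξ(c • x)`
(i.e. at the "dilate" `cξ` of `ξ`): `(1/|H|) ∑_x 1_A(x) ξ(-(c • x))`. -/
noncomputable def dilFourier {H : Type*} [AddCommGroup H] [Fintype H] [DecidableEq H]
    (A : Finset H) (ξ : AddChar H ℂ) (c : ℕ) : ℂ :=
  (1 / (Fintype.card H : ℂ)) * ∑ x : H, (indic A x : ℂ) * ξ (-(c • x))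

/-!
Doubling is a bijection of `H` since `|H|` is odd, so substituting `x ↦ 2x` in the sum defining
`1̂_A(cξ)` gives `(1/|H|) ∑ₓ 1_A(2x) ξ(-2cx)`. Hence `1̂_A(2cξ) - 1̂_A(cξ)` is the average of
`(1_A(x) - 1_A(2x)) ξ(-2cx)`, whose modulus is at most the doubling defect `4ε₁`. Summing this
along the chain `ξ, 2ξ, …, 2ʲξ` gives `4jε₁`.
-/

theorem Odd.nsmul_two_bijective {H : Type*} [AddGroup H] [Fintype H]
    (hodd : Odd (Fintype.card H)) : Function.Bijective (fun x : H => 2 • x) :=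
  Nat.Coprime.nsmul_right_bijective <| by
    rwa [Nat.card_eq_fintype_card, Nat.coprime_comm, Nat.coprime_two_left]

section DilFourier

variable {H : Type*} [AddCommGroup H] [Fintype H] [DecidableEq H]

theorem dilFourier_eq_sum_comp_two_nsmul (hodd : Odd (Fintype.card H)) (A : Finset H)
    (ξ : AddChar H ℂ) (c : ℕ) :
    dilFourier A ξ c =
      (1 / (Fintype.card H : ℂ)) * ∑ x : H, (indic A (2 • x) : ℂ) * ξ (-((2 * c) • x)) := by
  rw [dilFourier, ← (Equiv.ofBijective _ hodd.nsmul_two_bijective).sum_comp]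
  simp only [Equiv.ofBijective_apply, smul_smul, mul_comm c]

theorem norm_dilFourier_two_mul_sub_le (hodd : Odd (Fintype.card H)) (A : Finset H)
    (ξ : AddChar H ℂ) (c : ℕ) :
    ‖dilFourier A ξ (2 * c) - dilFourier A ξ c‖ ≤
      (1 / (Fintype.card H : ℝ)) * ∑ x : H, |indic A x - indic A (2 • x)| := by
  have hdiff : dilFourier A ξ (2 * c) - dilFourier A ξ c =
      (1 / (Fintype.card H : ℂ)) *
        ∑ x : H, ((indic A x - indic A (2 • x) : ℝ) : ℂ) * ξ (-((2 * c) • x)) := by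
    rw [dilFourier_eq_sum_comp_two_nsmul hodd A ξ c, dilFourier, ← mul_sub,
      ← Finset.sum_sub_distrib]
    push_cast
    simp only [sub_mul]
  rw [hdiff, norm_mul, norm_div, norm_one, Complex.norm_natCast]
  gcongr
  refine (norm_sum_le _ _).trans (Finset.sum_le_sum fun x _ => ?_)
  rw [norm_mul, AddChar.norm_apply, mul_one, Complex.norm_real, Real.norm_eq_abs]

end DilFourier

theorem iterated_doubling_bound_general {H : Type*} [AddCommGroup H] [Fintype H] [DecidableEq H]
    (hodd : Odd (Fintype.card H))
    (A : Finset H) (ε₁ : ℝ)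
    (hdouble : (1 / (Fintype.card H : ℝ)) *
        ∑ x : H, |indic A x - indic A (2 • x)| ≤ 4 * ε₁) :
    ∀ (ξ : AddChar H ℂ) (j : ℕ),
      ‖dilFourier A ξ (2 ^ j) - dilFourier A ξ 1‖ ≤ 4 * j * ε₁ := by
  intro ξ j
  have step (k : ℕ) :
      dist (dilFourier A ξ (2 ^ k)) (dilFourier A ξ (2 ^ (k + 1))) ≤ 4 * ε₁ := by
    rw [dist_comm, dist_eq_norm, pow_succ']
    exact (norm_dilFourier_two_mul_sub_le hodd A ξ _).trans hdouble
  calc ‖dilFourier A ξ (2 ^ j) - dilFourier A ξ 1‖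
      = dist (dilFourier A ξ (2 ^ 0)) (dilFourier A ξ (2 ^ j)) := by
        rw [dist_comm, dist_eq_norm, pow_zero]
    _ ≤ ∑ _k ∈ Finset.range j, 4 * ε₁ :=
        dist_le_range_sum_of_dist_le (f := fun k => dilFourier A ξ (2 ^ k)) j fun _ => step _
    _ = 4 * j * ε₁ := by
        rw [Finset.sum_const, Finset.card_range, nsmul_eq_mul]
        ring

theorem iterated_doubling_bound {H : Type*} [AddCommGroup H] [Fintype H] [DecidableEq H]
    (hodd : Odd (Fintype.card H))
    (A : Finset H) (ε₁ : ℝ) (hε₁ : 0 < ε₁)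
    (hdouble : (1 / (Fintype.card H : ℝ)) *
        ∑ x : H, |indic A x - indic A (2 • x)| ≤ 4 * ε₁) :
    ∀ (ξ : AddChar H ℂ) (j : ℕ),
      ‖dilFourier A ξ (2 ^ j) - dilFourier A ξ 1‖ ≤ 4 * j * ε₁ :=
  iterated_doubling_bound_general hodd A ε₁ hdouble
end
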